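/- Local variable promotion (SSA renaming) is sound for straight-line code: let P be a straight-line program with a mutable variable x having stores at positions p₁ < p₂ < … < p_m. Construct P' by introducing fresh immutable variables x₁,…,x_m, replacing the i-th 'store x e' with 'x_i := e', and replacing each 'r := load x' with 'r := x_i' where p_i is the greatest store position preceding the load. Then P and P' compute the same values for all immutable result variables. -/

import Mathlib

/-- Mutable variable names. -/
abbrev VName := String
/-- Immutable result variable names. -/
abbrev RName := String

/-- Expressions read only immutable variables. -/
abbrev Expr (V : Type) := (RName → Option V) → Option V

/-- Straight-line instructions over values `V`:
`store x e` stores the value of expression `e` into mutable variable `x`;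
`load r x` sets immutable variable `r` to the contents of `x`;
`assign r e` sets immutable variable `r` to the value of expression `e`. -/
inductive Instr (V : Type) where
  | store (x : VName) (e : Expr V)
  | load (r : RName) (x : VName)
  | assign (r : RName) (e : Expr V)

/-- Program states: a store `σ` and an immutable environment `ρ`. -/
abbrev PState (V : Type) := (VName → Option V) × (RName → Option V)

def stepInstr {V : Type} (st : PState V) : Instr V → PState V
  | .store x e => (Function.update st.1 x (e st.2), st.2)
  | .load r x => (st.1, Function.update st.2 r (st.1 x))
  | .assign r e => (st.1, Function.update st.2 r (e st.2))

/-- Sequential execution of a straight-line program. -/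
def run {V : Type} (P : List (Instr V)) (st : PState V) : PState V :=
  P.foldl stepInstr st

/-- SSA renaming of the mutable variable `x`: the `i`-th store of `x` becomes
an assignment to the fresh immutable variable `fresh i`, and each load of `x`
becomes a copy from the fresh variable of the nearest preceding store.
The counter argument records how many stores of `x` have been seen. -/
def ssa {V : Type} (x : VName) (fresh : ℕ → RName) :
    ℕ → List (Instr V) → List (Instr V)
  | _, [] => []
  | i, .store y e :: rest =>
      if y = x then .assign (fresh (i + 1)) e :: ssa x fresh (i + 1) rest
      else .store y e :: ssa x fresh i rest
  | i, .load r y :: rest =>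
      if y = x then .assign r (fun ρ => ρ (fresh i)) :: ssa x fresh i rest
      else .load r y :: ssa x fresh i rest
  | i, .assign r e :: rest => .assign r e :: ssa x fresh i rest

/-- An expression depends only on non-fresh immutable variables. -/
def ExprAvoids {V : Type} (fresh : ℕ → RName) (e : Expr V) : Prop :=
  ∀ ρ ρ' : RName → Option V,
    (∀ s : RName, (∀ k, s ≠ fresh k) → ρ s = ρ' s) → e ρ = e ρ'

/-- An instruction neither reads nor writes the fresh immutable variables. -/
def InstrAvoids {V : Type} (fresh : ℕ → RName) : Instr V → Prop
  | .store _ e => ExprAvoids fresh e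
  | .load r _ => ∀ k, r ≠ fresh k
  | .assign r e => (∀ k, r ≠ fresh k) ∧ ExprAvoids fresh e

/-!
Promotion is proved by a simulation. Running `P` and its renaming `ssa x fresh i P` side by side,
the two states agree on every mutable variable other than `x` and on every non-fresh immutable
variable. Moreover, from the first store of `x` on, the fresh variable of the latest store holds
the current contents of `x`, so every rewritten load copies the value the original load reads;
well-formedness guarantees that no load of `x` happens before that point.
-/

section Promotion

variable {V : Type} {x : VName} {fresh : ℕ → RName}

def LoadsPrecededByStore (x : VName) (P : List (Instr V)) : Prop :=
  ∀ (Q : List (Instr V)) (r : RName) (R : List (Instr V)),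
    P = Q ++ Instr.load r x :: R → ∃ e : Expr V, Instr.store x e ∈ Q

theorem LoadsPrecededByStore.of_cons {a : Instr V} {P : List (Instr V)}
    (h : LoadsPrecededByStore x (a :: P)) (ha : ∀ e, a ≠ .store x e) :
    LoadsPrecededByStore x P := by
  intro Q r R hP
  obtain ⟨e, he⟩ := h (a :: Q) r R (by simp [hP])
  rcases List.mem_cons.1 he with rfl | he
  · exact absurd rfl (ha e)
  · exact ⟨e, he⟩

theorem not_loadsPrecededByStore_load_cons {r : RName} {P : List (Instr V)} :
    ¬ LoadsPrecededByStore x (.load r x :: P) := fun h => by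
  simpa using h [] r P rfl

structure AgreeOff (x : VName) (fresh : ℕ → RName) (st st' : PState V) : Prop where
  store_eq : ∀ y, y ≠ x → st'.1 y = st.1 y
  env_eq : ∀ s, (∀ k, s ≠ fresh k) → st'.2 s = st.2 s

namespace AgreeOff

variable {σ σ' : VName → Option V} {ρ ρ' : RName → Option V}

theorem expr_eq (h : AgreeOff x fresh (σ, ρ) (σ', ρ')) {e : Expr V}
    (he : ExprAvoids fresh e) : e ρ' = e ρ :=
  he ρ' ρ h.env_eq

theorem update_env (h : AgreeOff x fresh (σ, ρ) (σ', ρ')) (r : RName) {v v' : Option V}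
    (hv : v' = v) :
    AgreeOff x fresh (σ, Function.update ρ r v) (σ', Function.update ρ' r v') := by
  refine ⟨h.store_eq, fun s hs => ?_⟩
  by_cases hsr : s = r
  · subst hsr; simpa using hv
  · simpa [hsr] using h.env_eq s hs

theorem update_store (h : AgreeOff x fresh (σ, ρ) (σ', ρ')) (y : VName) {v v' : Option V}
    (hv : v' = v) :
    AgreeOff x fresh (Function.update σ y v, ρ) (Function.update σ' y v', ρ') := by
  refine ⟨fun z hz => ?_, h.env_eq⟩
  by_cases hzy : z = y
  · subst hzy; simpa using hv
  · simpa [hzy] using h.store_eq z hz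

theorem promote_store (h : AgreeOff x fresh (σ, ρ) (σ', ρ')) (k : ℕ) (v v' : Option V) :
    AgreeOff x fresh (Function.update σ x v, ρ) (σ', Function.update ρ' (fresh k) v') :=
  ⟨fun y hy => by simpa [hy] using h.store_eq y hy,
    fun s hs => by simpa [hs k] using h.env_eq s hs⟩

end AgreeOff

theorem run_ssa_agreeOff {P : List (Instr V)} (hP : ∀ a ∈ P, InstrAvoids fresh a)
    {i : ℕ} {st st' : PState V} (h : AgreeOff x fresh st st')
    (hx : LoadsPrecededByStore x P ∨ st'.2 (fresh i) = st.1 x) :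
    AgreeOff x fresh (run P st) (run (ssa x fresh i P) st') := by
  induction P generalizing i st st' with
  | nil => exact h
  | cons a P ih =>
    obtain ⟨σ, ρ⟩ := st
    obtain ⟨σ', ρ'⟩ := st'
    have hP' : ∀ b ∈ P, InstrAvoids fresh b := fun b hb => hP b (List.mem_cons_of_mem a hb)
    have ha := hP a List.mem_cons_self
    cases a with
    | store y e =>
      by_cases hy : y = x
      · subst hy
        simp only [ssa, if_true]
        refine ih hP' (h.promote_store (i + 1) _ _) (.inr ?_)
        simpa [stepInstr] using h.expr_eq ha
      · simp only [ssa, hy, if_false]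
        refine ih hP' (h.update_store y (h.expr_eq ha)) ?_
        refine hx.imp (·.of_cons (by simp [hy])) fun hi => ?_
        simpa [stepInstr, Ne.symm hy] using hi
    | load r y =>
      by_cases hy : y = x
      · subst hy
        have hi : ρ' (fresh i) = σ y := hx.resolve_left not_loadsPrecededByStore_load_cons
        simp only [ssa, if_true]
        refine ih hP' (h.update_env r hi) (.inr ?_)
        simpa [stepInstr, Ne.symm (ha i)] using hi
      · simp only [ssa, hy, if_false]
        refine ih hP' (h.update_env r (h.store_eq y hy)) ?_
        refine hx.imp (·.of_cons (by simp)) fun hi => ?_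
        simpa [stepInstr, Ne.symm (ha i)] using hi
    | assign r e =>
      simp only [ssa]
      refine ih hP' (h.update_env r (h.expr_eq ha.2)) ?_
      refine hx.imp (·.of_cons (by simp)) fun hi => ?_
      simpa [stepInstr, Ne.symm (ha.1 i)] using hi

end Promotion

theorem local_variable_promotion_sound_general {V : Type} (x : VName)
    (fresh : ℕ → RName)
    (P : List (Instr V))
    (havoid : ∀ ins ∈ P, InstrAvoids fresh ins)
    (hwf : ∀ (Q : List (Instr V)) (r : RName) (R : List (Instr V)),
      P = Q ++ Instr.load r x :: R → ∃ e : Expr V, Instr.store x e ∈ Q)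
    (σ : VName → Option V) (ρ : RName → Option V) :
    ∀ s : RName, (∀ k, s ≠ fresh k) →
      (run P (σ, ρ)).2 s = (run (ssa x fresh 0 P) (σ, ρ)).2 s := by
  intro s hs
  exact ((run_ssa_agreeOff havoid ⟨fun _ _ => rfl, fun _ _ => rfl⟩ (.inl hwf)).env_eq s hs).symm

/-- local variable promotion (SSA renaming) is sound for
straight-line code: if every load of `x` in `P` is preceded by at least one
store of `x`, and the variables `fresh 0, fresh 1, …` are indeed fresh
(pairwise distinct and unused by `P`), then `P` and its SSA renaming compute
the same values for all (original) immutable result variables. -/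
theorem local_variable_promotion_sound {V : Type} (x : VName)
    (fresh : ℕ → RName) (hinj : Function.Injective fresh)
    (P : List (Instr V))
    (havoid : ∀ ins ∈ P, InstrAvoids fresh ins)
    (hwf : ∀ (Q : List (Instr V)) (r : RName) (R : List (Instr V)),
      P = Q ++ Instr.load r x :: R → ∃ e : Expr V, Instr.store x e ∈ Q)
    (σ : VName → Option V) (ρ : RName → Option V) :
    ∀ s : RName, (∀ k, s ≠ fresh k) →
      (run P (σ, ρ)).2 s = (run (ssa x fresh 0 P) (σ, ρ)).2 s :=
  local_variable_promotion_sound_general x fresh P havoid hwf σ ρ
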